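/- arXiv:1903.04453 — 5 statements merged into one kernel-verified Lean document; each statement's English description precedes it below -/
import Mathlib

section
/- For every odd cycle H and every nonempty proper subset S of the vertices of H, the neighborhood N(S) of S in H has strictly more elements than S. -/
/-!
Both translates `S + 1` and `S - 1` lie in `N(S)` and have `|S|` elements. If `|N(S)| ≤ |S|`,
both therefore equal `N(S)`, so `S + 2 = S`. For odd `n` the element `2` generates `ℤ/n`,
hence the stabilizer of `S` is everything and the nonempty set `S` is all of `ℤ/n`.
-/

open SimpleGraph Finset

open scoped Pointwise

namespace Finset

variable {G : Type*} [AddGroup G] [DecidableEq G]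

theorem eq_univ_of_vadd_finset_eq [Fintype G] {S : Finset G} {g : G} (hS : S.Nonempty)
    (hg : AddSubgroup.zmultiples g = ⊤) (h : g +ᵥ S = S) : S = univ := by
  have hstab : AddAction.stabilizer G S = ⊤ :=
    top_le_iff.mp (hg ▸ AddSubgroup.zmultiples_le.mpr (AddAction.mem_stabilizer_iff.mpr h))
  obtain ⟨s, hs⟩ := hS
  refine eq_univ_of_forall fun v => ?_
  have hv : (v - s) +ᵥ S = S := AddAction.mem_stabilizer_iff.mp (hstab ▸ AddSubgroup.mem_top _)
  simpa [hv] using vadd_mem_vadd_finset (a := v - s) hs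

theorem vadd_finset_eq_of_subset_of_card_le {S T : Finset G} {g : G} (hg : g +ᵥ S ⊆ T)
    (hT : T.card ≤ S.card) : g +ᵥ S = T :=
  eq_of_subset_of_card_le hg (by rwa [card_vadd_finset])

end Finset

theorem Fin.zmultiples_two_eq_top {n : ℕ} [NeZero n] (hn : Odd n) :
    AddSubgroup.zmultiples (2 : Fin n) = ⊤ := by
  let := Fin.instCommRing n
  obtain ⟨k, rfl⟩ := hn
  -- `2 (k + 1) = n + 1 ≡ 1`, so `x = ((k + 1) x) • 2`.
  refine (AddSubgroup.eq_top_iff' _).mpr fun x =>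
    AddSubgroup.mem_zmultiples_iff.mpr ⟨((k + 1) * x.val : ℕ), ?_⟩
  have hzero : ((2 * k + 1 : ℕ) : Fin (2 * k + 1)) = 0 := Fin.natCast_self _
  rw [natCast_zsmul, nsmul_eq_mul]
  push_cast at hzero ⊢
  linear_combination (x.val : Fin (2 * k + 1)) * hzero -
    (2 * k + 1 : Fin (2 * k + 1)) * Fin.cast_val_eq_self x

namespace SimpleGraph

theorem vadd_finset_subset_of_forall_adj {G : Type*} [AddGroup G] [Fintype G] [DecidableEq G]
    (H : SimpleGraph G) {g : G} (hg : ∀ u, H.Adj (g + u) u) (S : Finset G)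
    [DecidablePred fun v => ∃ u ∈ S, H.Adj v u] :
    g +ᵥ S ⊆ univ.filter fun v => ∃ u ∈ S, H.Adj v u := by
  intro v hv
  obtain ⟨u, hu, rfl⟩ := mem_vadd_finset.mp hv
  exact mem_filter.mpr ⟨mem_univ _, u, hu, hg u⟩

variable {m : ℕ}

theorem cycleGraph_adj_one_add (u : Fin (m + 2)) : (cycleGraph (m + 2)).Adj (1 + u) u := by
  simp [cycleGraph_adj]

theorem cycleGraph_adj_neg_one_add (u : Fin (m + 2)) : (cycleGraph (m + 2)).Adj (-1 + u) u := by
  simp [cycleGraph_adj]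

end SimpleGraph

theorem odd_cycle_neighborhood_gt_general (n : ℕ) (hodd : Odd n)
    (S : Finset (Fin n)) (hne : S.Nonempty) (hproper : S ≠ Finset.univ) :
    S.card < (Finset.univ.filter fun v => ∃ u ∈ S, (cycleGraph n).Adj v u).card := by
  obtain ⟨s, hs⟩ := hne
  obtain ⟨t, ht⟩ := not_forall.mp (mt eq_univ_of_forall hproper)
  obtain ⟨m, rfl⟩ : ∃ m, n = m + 2 := Nat.exists_eq_add_of_le'
    (Fin.nontrivial_iff_two_le.mp ⟨s, t, by rintro rfl; exact ht hs⟩)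
  by_contra! hcard
  have hplus := vadd_finset_eq_of_subset_of_card_le
    ((cycleGraph _).vadd_finset_subset_of_forall_adj cycleGraph_adj_one_add S) hcard
  have hminus := vadd_finset_eq_of_subset_of_card_le
    ((cycleGraph _).vadd_finset_subset_of_forall_adj cycleGraph_adj_neg_one_add S) hcard
  have htwo : (2 : Fin (m + 2)) +ᵥ S = S :=
    calc (2 : Fin (m + 2)) +ᵥ S = (1 : Fin (m + 2)) +ᵥ ((1 : Fin (m + 2)) +ᵥ S) := by
          rw [vadd_vadd]; rfl
      _ = (1 : Fin (m + 2)) +ᵥ ((-1 : Fin (m + 2)) +ᵥ S) := by rw [hplus, hminus]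
      _ = S := vadd_neg_vadd 1 S
  exact hproper (eq_univ_of_vadd_finset_eq ⟨s, hs⟩ (Fin.zmultiples_two_eq_top hodd) htwo)

/-- For every odd cycle `H = C_n` (`n` odd, `n ≥ 3`) and every nonempty
proper subset `S` of its vertices, the neighborhood `N(S)` has strictly more elements
than `S`. -/
theorem odd_cycle_neighborhood_gt (n : ℕ) (hodd : Odd n) (h3 : 3 ≤ n)
    (S : Finset (Fin n)) (hne : S.Nonempty) (hproper : S ≠ Finset.univ) :
    S.card < (Finset.univ.filter fun v => ∃ u ∈ S, (cycleGraph n).Adj v u).card :=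
  odd_cycle_neighborhood_gt_general n hodd S hne hproper
end

section
/- Let H be an odd cycle and let G be a graph. Let P = v_0 v_1 ... v_{k+1} be a path in G with k+1 edges such that every internal vertex of P has degree 2 in G. For any homomorphism φ mapping v_0 to a vertex of H, the set B_φ(v_{k+1} | v_0, P) of possible images of v_{k+1} under extensions of φ to P has size at least min(k+2, |V(H)|). -/
open SimpleGraph Fin.CommRing

/-!
Walking `i` steps forward and then `j` steps back around `C_n` gives a walk of length `i + j`
from `c` to `c + i - j`. Taking `i + j = k + 1` and `j = 0, 1, …, min (k + 1) (n - 1)`, the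
endpoints `c + (k + 1) - 2 j` are pairwise distinct because `2` is invertible modulo the odd
number `n`.
-/

namespace SimpleGraph.cycleGraph

variable {m : ℕ}

theorem exists_walk_add_natCast (a : Fin (m + 2)) (i : ℕ) :
    ∃ q : (cycleGraph (m + 2)).Walk a (a + i), q.length = i := by
  induction i generalizing a with
  | zero => exact ⟨Walk.nil.copy rfl (by simp), by simp⟩
  | succ i ih =>
    obtain ⟨q, hq⟩ := ih (a + 1)
    have hadj : (cycleGraph (m + 2)).Adj a (a + 1) := cycleGraph_adj.2 (.inr (by ring))
    exact ⟨(q.cons hadj).copy rfl (by push_cast; ring), by simp [hq]⟩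

theorem exists_walk_sub_natCast (a : Fin (m + 2)) (j : ℕ) :
    ∃ q : (cycleGraph (m + 2)).Walk a (a - j), q.length = j := by
  obtain ⟨q, hq⟩ := exists_walk_add_natCast (a - (j : Fin (m + 2))) j
  exact ⟨q.reverse.copy (by ring) rfl, by simp [hq]⟩

theorem exists_walk_add_sub_natCast (a : Fin (m + 2)) (i j : ℕ) :
    ∃ q : (cycleGraph (m + 2)).Walk a (a + i - j), q.length = i + j := by
  obtain ⟨q₁, hq₁⟩ := exists_walk_add_natCast a i
  obtain ⟨q₂, hq₂⟩ := exists_walk_sub_natCast (a + (i : Fin (m + 2))) j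
  exact ⟨q₁.append q₂, by simp [hq₁, hq₂]⟩

end SimpleGraph.cycleGraph

theorem Fin.natCast_two_mul_injOn_Iio {n : ℕ} [NeZero n] (hodd : Odd n) :
    (Set.Iio n).InjOn (fun j : ℕ => ((2 * j : ℕ) : Fin n)) := by
  intro j hj j' hj' h
  have h2 : 2 * j ≡ 2 * j' [MOD n] := (CharP.natCast_eq_natCast (Fin n) n).1 h
  exact (Nat.ModEq.cancel_left_of_coprime (Nat.coprime_comm.1 hodd.coprime_two_left) h2)
    |>.eq_of_lt_of_lt hj hj'

theorem reachable_set_card_ge_general (n : ℕ) (hodd : Odd n) (h3 : 3 ≤ n)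
    (k : ℕ)
    (c : Fin n) :
    min (k + 2) n ≤
      {x : Fin n | ∃ q : (cycleGraph n).Walk c x, q.length = k + 1}.ncard := by
  obtain ⟨m, rfl⟩ : ∃ m, n = m + 2 := ⟨n - 2, by omega⟩
  set S := {x : Fin (m + 2) | ∃ q : (cycleGraph (m + 2)).Walk c x, q.length = k + 1}
  set J := Set.Iio (min (k + 2) (m + 2))
  let e : ℕ → Fin (m + 2) := fun j => c + (k + 1 : ℕ) - ((2 * j : ℕ) : Fin (m + 2))
  have hmaps : Set.MapsTo e J S := fun j hj => by
    obtain ⟨q, hq⟩ := cycleGraph.exists_walk_add_sub_natCast c (k + 1 - j) j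
    have hjk : j ≤ k + 1 := by have := Set.mem_Iio.1 hj; omega
    refine ⟨q.copy rfl ?_, by rw [Walk.length_copy, hq]; omega⟩
    simp only [e, Nat.cast_sub hjk]
    push_cast
    ring
  have hinj : J.InjOn e := fun j hj j' hj' h =>
    ((Fin.natCast_two_mul_injOn_Iio hodd).mono (Set.Iio_subset_Iio (min_le_right _ _)))
      hj hj' (sub_right_injective h)
  calc min (k + 2) (m + 2) = J.ncard := (Set.ncard_Iio_nat _).symm
    _ = (e '' J).ncard := hinj.ncard_image.symm
    _ ≤ S.ncard := Set.ncard_le_ncard hmaps.image_subset S.toFinite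

/-- Let `H = C_n` be an odd cycle and `G` a graph.  Let `P` be a path in
`G` from `v₀` to `v_{k+1}` with `k+1` edges whose internal vertices all have degree 2
in `G`.  For any homomorphism `φ` sending `v₀` to a vertex `c` of `H`, the set
`B_φ(v_{k+1} | v₀, P)` of possible images of `v_{k+1}` under extensions of `φ` to `P`
(equivalently, the set of endpoints of walks of length `k+1` in `H` starting at `c`)
has size at least `min (k+2) n`. -/
theorem reachable_set_card_ge (n : ℕ) (hodd : Odd n) (h3 : 3 ≤ n)
    {V : Type} [Fintype V] (G : SimpleGraph V) [DecidableRel G.Adj]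
    (k : ℕ) {v0 v1 : V} (p : G.Walk v0 v1) (hpath : p.IsPath)
    (hlen : p.length = k + 1)
    (hint : ∀ w ∈ p.support, w ≠ v0 → w ≠ v1 → G.degree w = 2)
    (c : Fin n) :
    min (k + 2) n ≤
      {x : Fin n | ∃ q : (cycleGraph n).Walk c x, q.length = k + 1}.ncard :=
  reachable_set_card_ge_general n hodd h3 k c
end

section
/- If H is an odd cycle and G is an H-critical graph, then G contains no k-string with k ≥ |V(H)| − 2. -/
open SimpleGraph

/-- A graph `G` is `H`-critical if every proper subgraph of `G` admits a homomorphism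
to `H`, but `G` itself does not. -/
def HCritical {V W : Type} (G : SimpleGraph V) (H : SimpleGraph W) : Prop :=
  ¬ Nonempty (G →g H) ∧ ∀ G' : G.Subgraph, G' ≠ ⊤ → Nonempty (G'.coe →g H)

/-- A string in `G` is a path whose internal vertices all have degree 2 in `G`
and whose endpoints have degree at least 3. -/
def IsString {V : Type} [Fintype V] (G : SimpleGraph V) [DecidableRel G.Adj]
    {u v : V} (p : G.Walk u v) : Prop :=
  p.IsPath ∧ 3 ≤ G.degree u ∧ 3 ≤ G.degree v ∧
    ∀ w ∈ p.support, w ≠ u → w ≠ v → G.degree w = 2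

/-!
Deleting the first edge `u u₁` of a string `p` from `u` to `v` leaves a proper subgraph, which by
criticality maps to `C_n` by some `f`. Since `n` is odd, `C_n` has walks of every length
`≥ n - 1` between any two vertices, so the interior of `p` (of length `≥ n - 1`) can be
recoloured along a walk from `f u` to `f v`. Interior vertices of `p` have degree 2, so all
their edges are edges of `p`, and the recoloured map is a homomorphism of all of `G`: a
contradiction.
-/

namespace SimpleGraph

open Fin.CommRing

variable {V : Type*} {G : SimpleGraph V}

lemma Walk.exists_length_add_two_mul {u v x : V} (p : G.Walk u v) (hx : G.Adj u x) (j : ℕ) :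
    ∃ q : G.Walk u v, q.length = p.length + 2 * j := by
  induction j with
  | zero => exact ⟨p, rfl⟩
  | succ j ih =>
    obtain ⟨q, hq⟩ := ih
    exact ⟨.cons hx (.cons hx.symm q), by simp only [Walk.length_cons]; omega⟩

lemma cycleGraph_exists_walk_add {m : ℕ} (a : Fin (m + 2)) (d : ℕ) :
    ∃ w : (cycleGraph (m + 2)).Walk a (a + (d : Fin (m + 2))), w.length = d := by
  induction d with
  | zero => exact ⟨Walk.nil.copy rfl (by simp), by simp⟩
  | succ d ih =>
    obtain ⟨w, hw⟩ := ih
    have h : (cycleGraph (m + 2)).Adj (a + (d : Fin (m + 2))) (a + d + 1) :=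
      cycleGraph_adj.mpr (.inr (by ring))
    exact ⟨(w.concat h).copy rfl (by push_cast; ring), by simp [hw]⟩

lemma cycleGraph_exists_walk_length {n : ℕ} (hodd : Odd n) (hn : 1 < n) (a b : Fin n) {L : ℕ}
    (hL : n - 1 ≤ L) : ∃ w : (cycleGraph n).Walk a b, w.length = L := by
  obtain ⟨m, rfl⟩ : ∃ m, n = m + 2 := ⟨n - 2, by omega⟩
  set d := (b - a).val with hd
  have hd_lt : d < m + 2 := (b - a).isLt
  obtain ⟨w₁, hw₁⟩ : ∃ w : (cycleGraph (m + 2)).Walk a b, w.length = d := by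
    obtain ⟨w, hw⟩ := cycleGraph_exists_walk_add a d
    exact ⟨w.copy rfl (by simp [hd]), by simpa using hw⟩
  obtain ⟨w₂, hw₂⟩ : ∃ w : (cycleGraph (m + 2)).Walk a b, w.length = m + 2 - d := by
    obtain ⟨w, hw⟩ := cycleGraph_exists_walk_add b (m + 2 - d)
    have hba : b + ((m + 2 - d : ℕ) : Fin (m + 2)) = a := by
      rw [Nat.cast_sub hd_lt.le, hd]
      simp
    exact ⟨(w.copy rfl hba).reverse, by simpa using hw⟩
  -- `d` and `n - d` have different parities, and walks can be lengthened by `2` at a time.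
  have ha : (cycleGraph (m + 2)).Adj a (a + 1) := cycleGraph_adj.mpr (.inr (by ring))
  obtain ⟨t, ht⟩ := hodd
  by_cases hpar : (L - d) % 2 = 0
  · obtain ⟨w, hw⟩ := w₁.exists_length_add_two_mul ha ((L - d) / 2)
    exact ⟨w, by omega⟩
  · obtain ⟨w, hw⟩ := w₂.exists_length_add_two_mul ha ((L - (m + 2 - d)) / 2)
    exact ⟨w, by omega⟩

section Reroute

variable {W : Type*} {H : SimpleGraph W} [DecidableEq V] {u v : V}

def Walk.rerouteMap {a b : W} (p : G.Walk u v) (w : H.Walk a b) (f : V → W) : V → W :=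
  fun x => if x ∈ p.support then w.getVert (p.support.idxOf x) else f x

lemma Walk.IsPath.rerouteMap_getVert {a b : W} {p : G.Walk u v} (hp : p.IsPath)
    (w : H.Walk a b) (f : V → W) {i : ℕ} (hi : i ≤ p.length) :
    p.rerouteMap w f (p.getVert i) = w.getVert i := by
  have hmem := p.getVert_mem_support i
  have hidx : p.support.idxOf (p.getVert i) = i := by
    refine hp.getVert_injOn ?_ hi (p.getVert_support_idxOf hmem)
    have := List.idxOf_lt_length_of_mem hmem
    simp only [Walk.length_support] at this
    exact Nat.lt_succ_iff.mp this
  simp [rerouteMap, hmem, hidx]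

lemma Walk.IsPath.rerouteMap_of_forall_ne {p : G.Walk u v} (hp : p.IsPath) {f : V → W}
    (w : H.Walk (f u) (f v)) (hw : w.length = p.length) {x : V}
    (hx : ∀ i, 0 < i → i < p.length → p.getVert i ≠ x) : p.rerouteMap w f x = f x := by
  by_cases hmem : x ∈ p.support
  · obtain ⟨i, rfl, hi⟩ := Walk.mem_support_iff_exists_getVert.mp hmem
    rw [hp.rerouteMap_getVert w f hi]
    obtain rfl | h0 := Nat.eq_zero_or_pos i
    · simp
    · obtain rfl : i = p.length := by by_contra hne; exact hx i h0 (by omega) rfl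
      rw [← hw, Walk.getVert_length, hw, Walk.getVert_length]
  · simp [rerouteMap, hmem]

lemma Walk.IsPath.neighborFinset_getVert [G.LocallyFinite] {p : G.Walk u v} (hp : p.IsPath)
    {i : ℕ} (h0 : 0 < i) (hi : i < p.length) (hdeg : G.degree (p.getVert i) = 2) :
    G.neighborFinset (p.getVert i) = {p.getVert (i - 1), p.getVert (i + 1)} := by
  have hprev : G.Adj (p.getVert i) (p.getVert (i - 1)) := by
    simpa [Nat.sub_add_cancel h0] using (p.adj_getVert_succ (i := i - 1) (by omega)).symm
  have hnext : G.Adj (p.getVert i) (p.getVert (i + 1)) := p.adj_getVert_succ hi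
  refine (Finset.eq_of_subset_of_card_le (fun z hz => ?_) ?_).symm
  · rcases Finset.mem_insert.mp hz with rfl | hz
    · exact (G.mem_neighborFinset _ _).mpr hprev
    · rw [Finset.mem_singleton.mp hz]
      exact (G.mem_neighborFinset _ _).mpr hnext
  · have hne : p.getVert (i - 1) ≠ p.getVert (i + 1) := fun h => by
      have := hp.getVert_injOn (by simp only [Set.mem_ofPred_eq]; omega)
        (by simp only [Set.mem_ofPred_eq]; omega) h
      omega
    rw [card_neighborFinset_eq_degree, hdeg, Finset.card_pair hne]

theorem Walk.IsPath.nonempty_hom_of_reroute [G.LocallyFinite] {p : G.Walk u v} (hp : p.IsPath)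
    (hlen : 1 < p.length) (hdeg : ∀ i, 0 < i → i < p.length → G.degree (p.getVert i) = 2)
    (f : G.deleteEdges {s(u, p.snd)} →g H) (w : H.Walk (f u) (f v)) (hw : w.length = p.length) :
    Nonempty (G →g H) := by
  have hinterior : ∀ i y, 0 < i → i < p.length → G.Adj (p.getVert i) y →
      H.Adj (p.rerouteMap w f (p.getVert i)) (p.rerouteMap w f y) := by
    intro i y h0 hi hy
    have hy' := (G.mem_neighborFinset _ _).mpr hy
    rw [hp.neighborFinset_getVert h0 hi (hdeg i h0 hi), Finset.mem_insert,
      Finset.mem_singleton] at hy'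
    rw [hp.rerouteMap_getVert w f hi.le]
    rcases hy' with rfl | rfl
    · rw [hp.rerouteMap_getVert w f (by omega)]
      simpa [Nat.sub_add_cancel h0] using (w.adj_getVert_succ (i := i - 1) (by omega)).symm
    · rw [hp.rerouteMap_getVert w f hi]
      exact w.adj_getVert_succ (by omega)
  refine ⟨⟨p.rerouteMap w f, fun {x y} hxy => ?_⟩⟩
  by_cases hx : ∃ i, 0 < i ∧ i < p.length ∧ p.getVert i = x
  · obtain ⟨i, h0, hi, rfl⟩ := hx
    exact hinterior i y h0 hi hxy
  by_cases hy : ∃ i, 0 < i ∧ i < p.length ∧ p.getVert i = y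
  · obtain ⟨i, h0, hi, rfl⟩ := hy
    exact (hinterior i x h0 hi hxy.symm).symm
  push Not at hx hy
  rw [hp.rerouteMap_of_forall_ne w hw hx, hp.rerouteMap_of_forall_ne w hw hy]
  refine f.map_adj ((deleteEdges_adj ..).mpr ⟨hxy, fun he => ?_⟩)
  rcases Sym2.eq_iff.mp he with ⟨-, rfl⟩ | ⟨rfl, -⟩
  · exact hy 1 one_pos hlen rfl
  · exact hx 1 one_pos hlen rfl

end Reroute

end SimpleGraph

lemma HCritical.nonempty_deleteEdges_hom {V W : Type} {G : SimpleGraph V} {H : SimpleGraph W}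
    (hcrit : HCritical G H) {x y : V} (hxy : G.Adj x y) :
    Nonempty (G.deleteEdges {s(x, y)} →g H) := by
  set G' := (⊤ : G.Subgraph).deleteEdges {s(x, y)}
  have hG' : G' ≠ ⊤ := fun h => by
    have : G'.Adj x y := h ▸ hxy
    exact this.2 rfl
  obtain ⟨f⟩ := hcrit.2 G' hG'
  have hspan : G.deleteEdges {s(x, y)} = G'.spanningCoe :=
    Subgraph.deleteEdges_spanningCoe_eq (G' := ⊤) _
  exact ⟨f.comp ((G'.spanningCoeEquivCoeOfSpanning fun _ => trivial).toHom.comp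
    (Hom.ofLE hspan.le))⟩

lemma IsString.degree_getVert {V : Type} [Fintype V] {G : SimpleGraph V} [DecidableRel G.Adj]
    {u v : V} {p : G.Walk u v} (hs : IsString G p) {i : ℕ} (h0 : 0 < i) (hi : i < p.length) :
    G.degree (p.getVert i) = 2 :=
  hs.2.2.2 _ (p.getVert_mem_support i) (by rw [ne_eq, hs.1.getVert_eq_start_iff hi.le]; omega)
    (by rw [ne_eq, hs.1.getVert_eq_end_iff hi.le]; omega)

/-- If `H = C_n` is an odd cycle and `G` is an `H`-critical graph, then
`G` contains no `k`-string with `k ≥ n - 2` (a `k`-string has `k` internal vertices,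
i.e. length `k+1`). -/
theorem hCritical_no_long_string (n : ℕ) (hodd : Odd n) (h3 : 3 ≤ n)
    {V : Type} [Fintype V] (G : SimpleGraph V) [DecidableRel G.Adj]
    (hcrit : HCritical G (cycleGraph n)) :
    ∀ (k : ℕ), n - 2 ≤ k → ∀ (u v : V) (p : G.Walk u v),
      p.length = k + 1 → ¬ IsString G p := by
  classical
  intro k hk u v p hlen hs
  have hu : G.Adj u p.snd := p.adj_snd (by simp [Walk.not_nil_iff_lt_length, hlen])
  obtain ⟨f⟩ := hcrit.nonempty_deleteEdges_hom hu
  obtain ⟨w, hw⟩ := cycleGraph_exists_walk_length hodd (by omega) (f u) (f v) (L := p.length)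
    (by omega)
  exact hcrit.1 (hs.1.nonempty_hom_of_reroute (by omega) (fun i => hs.degree_getVert) f w hw)
end

section
/- Let H be an odd cycle and G an H-critical graph. If u and v are the endpoints of two distinct strings S_1 (a k_1-string) and S_2 (a k_2-string) in G, then k_1 and k_2 have different parities (k_1 ≢ k_2 mod 2). -/
open SimpleGraph

/-!
Suppose two strings `p₁`, `p₂` from `u` to `v` have lengths of equal parity, `p₁` the
shorter. A string is determined by its first edge, so `p₁` avoids the first edge `e` of `p₂`,
and by criticality `G - e` maps to `H` by some `φ`. The image of `p₁` is a walk from `φ u` to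
`φ v`, which back-and-forth steps lengthen to exactly the length of `p₂`. Redefining `φ` on the
interior of `p₂` to follow this walk gives a homomorphism `G →g H`: the interior vertices of a
string meet no edges other than those of the string.
-/

namespace SimpleGraph.Walk

variable {V W : Type} {G : SimpleGraph V} {H : SimpleGraph W} {u v : V}

theorem IsPath.not_nil_of_ne {p q : G.Walk u v} (hp : p.IsPath) (hq : q.IsPath) (hne : p ≠ q) :
    ¬ p.Nil := by
  intro hnil
  obtain rfl := hnil.eq
  exact hne ((eq_nil_iff_nil.mpr (isPath_iff_nil.mp hp)).trans
    (eq_nil_iff_nil.mpr (isPath_iff_nil.mp hq)).symm)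

theorem exists_length_eq_add_two_mul {a b : W} (q : H.Walk a b) (hq : ¬ q.Nil) (t : ℕ) :
    ∃ r : H.Walk a b, r.length = q.length + 2 * t := by
  induction t with
  | zero => exact ⟨q, rfl⟩
  | succ t ih =>
    obtain ⟨r, hr⟩ := ih
    have h := q.adj_penultimate hq
    exact ⟨(r.concat h.symm).concat h, by simp [hr]; ring⟩

theorem IsPath.mem_edges_of_adj_of_degree_eq_two [Fintype V] [DecidableRel G.Adj]
    {p : G.Walk u v} (hp : p.IsPath) {x y : V} (hx : x ∈ p.support) (hxu : x ≠ u)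
    (hxv : x ≠ v) (hdeg : G.degree x = 2) (hxy : G.Adj x y) : s(x, y) ∈ p.edges := by
  obtain ⟨i, rfl, hi⟩ := mem_support_iff_exists_getVert.mp hx
  have hi0 : i ≠ 0 := by rintro rfl; exact hxu p.getVert_zero
  have hil : i < p.length := lt_of_le_of_ne hi (by rintro rfl; exact hxv p.getVert_length)
  have hnbr : p.toSubgraph.neighborSet (p.getVert i) = G.neighborSet (p.getVert i) := by
    refine Set.eq_of_subset_of_ncard_le (p.toSubgraph.neighborSet_subset _) ?_
    rw [hp.ncard_neighborSet_toSubgraph_internal_eq_two hi0 hil, Set.ncard_eq_toFinset_card',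
      Set.toFinset_card, card_neighborSet_eq_degree, hdeg]
  rw [← mem_edges_toSubgraph, Subgraph.mem_edgeSet, ← Subgraph.mem_neighborSet, hnbr]
  exact hxy

theorem IsPath.eq_of_snd_eq [Fintype V] [DecidableRel G.Adj] {p q : G.Walk u v}
    (hp : p.IsPath) (hq : q.IsPath)
    (hdeg : ∀ x ∈ p.support, x ≠ u → x ≠ v → G.degree x = 2) (hsnd : p.snd = q.snd) :
    p = q := by
  induction p with
  | nil => exact (eq_nil_iff_nil.mpr (isPath_iff_nil.mp hq)).symm
  | @cons u x v hux p' ih =>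
    have hup' : u ∉ p'.support := (cons_isPath_iff _ _).mp hp |>.2
    cases q with
    | nil => exact absurd p'.end_mem_support hup'
    | cons hux' q' =>
      obtain rfl : x = _ := by simpa using hsnd
      have huq' : u ∉ q'.support := (cons_isPath_iff _ _).mp hq |>.2
      have hxu : x ≠ u := fun h => hup' (h ▸ p'.start_mem_support)
      by_cases hxv : x = v
      · subst hxv
        rw [eq_nil_iff_nil.mpr (isPath_iff_nil.mp hp.of_cons),
          eq_nil_iff_nil.mpr (isPath_iff_nil.mp hq.of_cons)]
      have hnil : ¬ q'.Nil := fun h => hxv h.eq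
      have hedge : s(x, q'.snd) ∈ s(u, x) :: p'.edges :=
        hp.mem_edges_of_adj_of_degree_eq_two (by simp) hxu hxv (hdeg x (by simp) hxu hxv)
          (q'.adj_snd hnil)
      rcases List.mem_cons.mp hedge with hback | hedge
      · have : q'.snd = u := by
          rw [Sym2.eq_iff] at hback
          grind
        exact absurd (this ▸ q'.getVert_mem_support 1) huq'
      · have hdeg' : ∀ y ∈ p'.support, y ≠ x → y ≠ v → G.degree y = 2 :=
          fun y hy _ hyv => hdeg y (by simp [hy]) (fun h => hup' (h ▸ hy)) hyv
        rw [ih hp.of_cons hq.of_cons hdeg' (hp.of_cons.eq_snd_of_mem_edges hedge).symm]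

theorem IsPath.nonempty_hom_of_reroute_s4 {p : G.Walk u v} (hp : p.IsPath)
    (hclosed : ∀ x ∈ p.support, x ≠ u → x ≠ v → ∀ y, G.Adj x y → s(x, y) ∈ p.edges)
    (φ : G.deleteEdges p.edgeSet →g H) (q : H.Walk (φ u) (φ v)) (hq : q.length = p.length) :
    Nonempty (G →g H) := by
  classical
  let ψ : V → W := fun x => if x ∈ p.support then q.getVert (p.support.idxOf x) else φ x
  have hψ_getVert : ∀ i ≤ p.length, ψ (p.getVert i) = q.getVert i := by
    intro i hi
    have hmem := p.getVert_mem_support i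
    have hidx : p.support.idxOf (p.getVert i) ≤ p.length := by
      have := List.idxOf_lt_length_of_mem hmem
      rw [length_support] at this
      omega
    simp only [ψ, if_pos hmem, hp.getVert_injOn hidx hi (p.getVert_support_idxOf hmem)]
  have hψ_eq : ∀ x, (x ∈ p.support → x = u ∨ x = v) → ψ x = φ x := by
    intro x hx
    by_cases hmem : x ∈ p.support
    · rcases hx hmem with rfl | rfl
      · simpa using hψ_getVert 0 (Nat.zero_le _)
      · have := hψ_getVert p.length le_rfl
        rwa [getVert_length, ← hq, getVert_length] at this
    · exact if_neg hmem
  refine ⟨⟨ψ, fun {x y} hxy => ?_⟩⟩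
  by_cases he : s(x, y) ∈ p.edges
  · obtain ⟨i, hi, hil⟩ := p.toSubgraph_adj_iff.mp (p.adj_toSubgraph_iff_mem_edges.mpr he)
    have hstep := q.adj_getVert_succ (hq ▸ hil)
    rw [← hψ_getVert i hil.le, ← hψ_getVert (i + 1) hil] at hstep
    rcases Sym2.eq_iff.mp hi with ⟨rfl, rfl⟩ | ⟨rfl, rfl⟩
    · exact hstep
    · exact hstep.symm
  · have hx : x ∈ p.support → x = u ∨ x = v := fun hx => by
      by_contra! h
      exact he (hclosed x hx h.1 h.2 y hxy)
    have hy : y ∈ p.support → y = u ∨ y = v := fun hy => by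
      by_contra! h
      exact he (Sym2.eq_swap ▸ hclosed y hy h.1 h.2 x hxy.symm)
    rw [hψ_eq x hx, hψ_eq y hy]
    exact φ.map_adj (deleteEdges_adj.mpr ⟨hxy, he⟩)

end SimpleGraph.Walk

open Walk

theorem HCritical.nonempty_hom_deleteEdges {V W : Type} {G : SimpleGraph V} {H : SimpleGraph W}
    (hG : HCritical G H) {e : Sym2 V} (he : e ∈ G.edgeSet) :
    Nonempty (G.deleteEdges {e} →g H) := by
  set G' := (⊤ : G.Subgraph).deleteEdges {e}
  have hG' : G' ≠ ⊤ := fun h => by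
    have := congrArg Subgraph.spanningCoe h
    simp only [G', ← Subgraph.deleteEdges_spanningCoe_eq, Subgraph.spanningCoe_top,
      deleteEdges_eq_self, Set.disjoint_singleton_right] at this
    exact this he
  obtain ⟨φ⟩ := hG.2 G' hG'
  exact ⟨φ.comp ((G'.spanningCoeEquivCoeOfSpanning fun _ => trivial).toHom.comp
    (Hom.ofLE (by simp [G', ← Subgraph.deleteEdges_spanningCoe_eq])))⟩

theorem HCritical.length_mod_two_ne {V W : Type} [Fintype V] {G : SimpleGraph V}
    [DecidableRel G.Adj] {H : SimpleGraph W} (hG : HCritical G H) {u v : V}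
    {p₁ p₂ : G.Walk u v} (hp₁ : p₁.IsPath) (hp₂ : p₂.IsPath)
    (hdeg₁ : ∀ x ∈ p₁.support, x ≠ u → x ≠ v → G.degree x = 2)
    (hdeg₂ : ∀ x ∈ p₂.support, x ≠ u → x ≠ v → G.degree x = 2) (hne : p₁ ≠ p₂) :
    p₁.length % 2 ≠ p₂.length % 2 := by
  wlog hle : p₁.length ≤ p₂.length generalizing p₁ p₂
  · exact fun h => this hp₂ hp₁ hdeg₂ hdeg₁ hne.symm (by omega) h.symm
  intro hpar
  have hnil₁ := hp₁.not_nil_of_ne hp₂ hne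
  have hnil₂ := hp₂.not_nil_of_ne hp₁ hne.symm
  have he₂ : s(u, p₂.snd) ∈ p₂.edges := p₂.mk_start_snd_mem_edges hnil₂
  have he₁ : s(u, p₂.snd) ∉ p₁.edges := fun he =>
    hne (hp₂.eq_of_snd_eq hp₁ hdeg₂ (hp₁.eq_snd_of_mem_edges he)).symm
  obtain ⟨φ⟩ := hG.nonempty_hom_deleteEdges (G.mem_edgeSet.mpr (p₂.adj_snd hnil₂))
  let q₁ : H.Walk (φ u) (φ v) := (p₁.toDeleteEdge _ he₁).map φ
  have hq₁ : q₁.length = p₁.length := by simp [q₁]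
  obtain ⟨q, hq⟩ := q₁.exists_length_eq_add_two_mul
    (by rwa [not_nil_iff_lt_length, hq₁, ← not_nil_iff_lt_length])
    ((p₂.length - p₁.length) / 2)
  exact hG.1 (hp₂.nonempty_hom_of_reroute_s4
    (fun x hx hxu hxv y => hp₂.mem_edges_of_adj_of_degree_eq_two hx hxu hxv (hdeg₂ x hx hxu hxv))
    (φ.comp (Hom.ofLE (deleteEdges_anti (Set.singleton_subset_iff.mpr he₂)))) q
    (hq.trans (by omega)))

theorem parallel_strings_opposite_parity_general (n : ℕ)
    {V : Type} [Fintype V] (G : SimpleGraph V) [DecidableRel G.Adj]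
    (hcrit : HCritical G (cycleGraph n))
    (u v : V) (p₁ p₂ : G.Walk u v)
    (h₁ : IsString G p₁) (h₂ : IsString G p₂) (hne : p₁ ≠ p₂)
    (k₁ k₂ : ℕ) (hk₁ : p₁.length = k₁ + 1) (hk₂ : p₂.length = k₂ + 1) :
    ¬ (k₁ % 2 = k₂ % 2) := by
  have := hcrit.length_mod_two_ne h₁.1 h₂.1 h₁.2.2.2 h₂.2.2.2 hne
  omega

/-- Let `H = C_n` be an odd cycle and `G` an `H`-critical graph.  If `u`
and `v` are the common endpoints of two distinct strings, a `k₁`-string and a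
`k₂`-string, then `k₁ ≢ k₂ (mod 2)`. -/
theorem parallel_strings_opposite_parity (n : ℕ) (hodd : Odd n) (h3 : 3 ≤ n)
    {V : Type} [Fintype V] (G : SimpleGraph V) [DecidableRel G.Adj]
    (hcrit : HCritical G (cycleGraph n))
    (u v : V) (p₁ p₂ : G.Walk u v)
    (h₁ : IsString G p₁) (h₂ : IsString G p₂) (hne : p₁ ≠ p₂)
    (k₁ k₂ : ℕ) (hk₁ : p₁.length = k₁ + 1) (hk₂ : p₂.length = k₂ + 1) :
    ¬ (k₁ % 2 = k₂ % 2) :=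
  parallel_strings_opposite_parity_general n G hcrit u v p₁ p₂ h₁ h₂ hne k₁ k₂ hk₁ hk₂
end

section
/- Let H be an odd cycle and G an H-critical graph. If v is a vertex of G of degree d ≥ 3 incident with d distinct strings with k_1, ..., k_d internal vertices respectively, then k_1 + ... + k_d ≤ (|V(H)| − 2)·d − |V(H)|. -/
open SimpleGraph

namespace SimpleGraph

variable {V : Type} {G : SimpleGraph V}

theorem Adj.eq_or_eq_of_degree_eq_two [Fintype V] [DecidableRel G.Adj] {x a b y : V}
    (hx : G.degree x = 2) (ha : G.Adj x a) (hb : G.Adj x b) (hab : a ≠ b) (hy : G.Adj x y) :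
    y = a ∨ y = b := by
  classical
  have hN : G.neighborFinset x = {a, b} :=
    (Finset.eq_of_subset_of_card_le (by simp [Finset.insert_subset_iff, ha, hb])
      (by rw [Finset.card_pair hab, card_neighborFinset_eq_degree, hx])).symm
  simpa [hN] using (G.mem_neighborFinset x y).2 hy

namespace Walk

def internalVerts {u v : V} (p : G.Walk u v) : Set V :=
  {x | ∃ s, 0 < s ∧ s < p.length ∧ p.getVert s = x}

theorem IsPath.start_notMem_internalVerts {u v : V} {p : G.Walk u v} (hp : p.IsPath) :
    u ∉ p.internalVerts := by
  rintro ⟨s, hs0, hs, hsu⟩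
  exact hs0.ne' ((hp.getVert_eq_start_iff hs.le).1 hsu)

end Walk

theorem adj_iff_exists_snd_eq_of_degree_le [Fintype V] [DecidableRel G.Adj] {ι : Type}
    [Fintype ι] {v : V} {w : ι → V} {p : ∀ i, G.Walk v (w i)} (hnil : ∀ i, ¬ (p i).Nil)
    (hsnd : Function.Injective fun i => (p i).snd) (hdeg : G.degree v ≤ Fintype.card ι) (y : V) :
    G.Adj v y ↔ ∃ i, (p i).snd = y := by
  classical
  have hsub : Finset.univ.image (fun i => (p i).snd) ⊆ G.neighborFinset v := by
    simpa [Finset.subset_iff] using fun i => (p i).adj_snd (hnil i)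
  have heq := Finset.eq_of_subset_of_card_le hsub (by
    rwa [Finset.card_image_of_injective _ hsnd, card_neighborFinset_eq_degree, Finset.card_univ])
  simpa using (Finset.ext_iff.1 heq y).symm

end SimpleGraph

open SimpleGraph Walk

namespace IsString

variable {V : Type} [Fintype V] {G : SimpleGraph V} [DecidableRel G.Adj] {u b c : V}
  {p : G.Walk u b} {q : G.Walk u c}

theorem isPath (hp : IsString G p) : p.IsPath := hp.1

theorem degree_eq_two (hp : IsString G p) {x : V} (hx : x ∈ p.internalVerts) :
    G.degree x = 2 := by
  obtain ⟨s, hs0, hs, rfl⟩ := hx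
  refine hp.2.2.2 _ (p.getVert_mem_support s) (fun h => ?_) (fun h => ?_)
  · exact hs0.ne' ((hp.isPath.getVert_eq_start_iff hs.le).1 h)
  · exact hs.ne ((hp.isPath.getVert_eq_end_iff hs.le).1 h)

theorem notMem_internalVerts_of_three_le_degree (hp : IsString G p) {x : V}
    (hx : 3 ≤ G.degree x) : x ∉ p.internalVerts :=
  fun h => by have := hp.degree_eq_two h; omega

theorem eq_getVert_pred_or_succ_of_adj (hp : IsString G p) {s : ℕ} (hs0 : 0 < s)
    (hs : s < p.length) {y : V} (hy : G.Adj (p.getVert s) y) :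
    y = p.getVert (s - 1) ∨ y = p.getVert (s + 1) := by
  have hpred : G.Adj (p.getVert s) (p.getVert (s - 1)) := by
    simpa [Nat.sub_add_cancel hs0] using (p.adj_getVert_succ (i := s - 1) (by omega)).symm
  have hne : p.getVert (s - 1) ≠ p.getVert (s + 1) := fun h => by
    have := hp.isPath.getVert_injOn (by simp; omega) (by simp; omega) h
    omega
  exact hpred.eq_or_eq_of_degree_eq_two (hp.degree_eq_two ⟨s, hs0, hs, rfl⟩)
    (p.adj_getVert_succ hs) hne hy

theorem mk_mem_edges_of_adj (hp : IsString G p) {x y : V} (hx : x ∈ p.internalVerts)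
    (hy : G.Adj x y) : s(x, y) ∈ p.edges := by
  obtain ⟨s, hs0, hs, rfl⟩ := hx
  rw [mk_mem_edges_iff_exists]
  rcases hp.eq_getVert_pred_or_succ_of_adj hs0 hs hy with rfl | rfl
  · exact ⟨s - 1, by omega, by rw [Nat.sub_add_cancel hs0, Sym2.eq_swap]⟩
  · exact ⟨s, hs, rfl⟩

theorem getVert_eq_of_snd_eq (hp : IsString G p) (hq : IsString G q) (h : p.snd = q.snd) :
    ∀ t, t ≤ p.length → t ≤ q.length → p.getVert t = q.getVert t := by
  intro t
  induction t using Nat.twoStepInduction with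
  | zero => simp
  | one => exact fun _ _ => h
  | more t ih ih' =>
    intro htp htq
    have hx := ih' (by omega) (by omega)
    have hadj : G.Adj (p.getVert (t + 1)) (q.getVert (t + 2)) :=
      hx ▸ q.adj_getVert_succ (i := t + 1) (by omega)
    rcases hp.eq_getVert_pred_or_succ_of_adj (by omega) (by omega) hadj with h' | h'
    · have := hq.isPath.getVert_injOn (by simp; omega) (by simp; omega)
        (h'.trans (ih (by omega) (by omega)))
      omega
    · exact h'.symm

theorem support_eq_of_snd_eq (hp : IsString G p) (hq : IsString G q) (h : p.snd = q.snd) :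
    p.support = q.support := by
  wlog hle : p.length ≤ q.length generalizing b c p q
  · exact (this hq hp h.symm (le_of_not_ge hle)).symm
  have hagree := hp.getVert_eq_of_snd_eq hq h
  have hlen : p.length = q.length := by
    by_contra hne
    rcases Nat.eq_zero_or_pos p.length with h0 | h0
    · have hsnd : q.snd = u :=
        h ▸ (p.getVert_of_length_le (by omega)).trans (p.eq_of_length_eq_zero h0).symm
      exact absurd ((hq.isPath.getVert_eq_start_iff (by omega)).1 hsnd) one_ne_zero
    · refine hq.notMem_internalVerts_of_three_le_degree hp.2.2.1
        ⟨p.length, h0, by omega, ?_⟩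
      rw [← hagree _ le_rfl hle, p.getVert_length]
  have hbc : b = c := by
    rw [← p.getVert_length, hagree _ le_rfl hle, hlen, q.getVert_length]
  subst hbc
  exact congrArg Walk.support (ext_getVert_le_length hlen fun t ht => hagree t ht (hlen ▸ ht))

theorem disjoint_internalVerts (hp : IsString G p) (hq : IsString G q) (h : p.snd ≠ q.snd) :
    Disjoint p.internalVerts q.internalVerts := by
  -- Walking along `q`, the interior of `p` can only be entered from an end of `p`: from `u` only
  -- through `p.snd`, and never from `b`, whose degree is at least 3.
  have key : ∀ t, t < q.length → q.getVert t ∉ p.internalVerts := by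
    intro t
    induction t with
    | zero => simpa using fun _ => hp.isPath.start_notMem_internalVerts
    | succ t ih =>
      rintro ht ⟨s, hs0, hs, hst⟩
      have hadj : G.Adj (p.getVert s) (q.getVert t) :=
        hst ▸ (q.adj_getVert_succ (by omega)).symm
      obtain ⟨s', hs', hs's, hys⟩ : ∃ s', (s' = s - 1 ∨ s' = s + 1) ∧ s' ≤ p.length ∧
          q.getVert t = p.getVert s' := by
        rcases hp.eq_getVert_pred_or_succ_of_adj hs0 hs hadj with h' | h'
        · exact ⟨s - 1, .inl rfl, by omega, h'⟩
        · exact ⟨s + 1, .inr rfl, by omega, h'⟩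
      have hext : s' = 0 ∨ s' = p.length := by
        by_contra! hmid
        exact ih (by omega) ⟨s', by omega, by omega, hys.symm⟩
      rcases hext with rfl | rfl
      · have ht0 : t = 0 :=
          (hq.isPath.getVert_eq_start_iff (by omega)).1 (hys.trans p.getVert_zero)
        subst ht0
        rw [show s = 1 by omega] at hst
        exact h hst
      · have ht0 : t ≠ 0 := by
          rintro rfl
          have := (hp.isPath.getVert_eq_start_iff le_rfl).1 (hys.symm.trans q.getVert_zero)
          omega
        have hyb : q.getVert t = b := hys.trans p.getVert_length
        exact hq.notMem_internalVerts_of_three_le_degree (by rw [hyb]; exact hp.2.2.1)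
          ⟨t, by omega, by omega, rfl⟩
  rw [Set.disjoint_right]
  rintro _ ⟨t, ht0, ht, rfl⟩
  exact key t ht

end IsString

namespace HCritical

variable {V W : Type} {G : SimpleGraph V} {H : SimpleGraph W}

theorem exists_map_adj_of_notMem [Nonempty W] (hG : HCritical G H) {S : Set V} {x₀ : V}
    (hx₀ : x₀ ∉ S) :
    ∃ f : V → W, ∀ ⦃x y⦄, G.Adj x y → x ∈ S → y ∈ S → H.Adj (f x) (f y) := by
  classical
  have hne : (⊤ : G.Subgraph).induce S ≠ ⊤ := fun h =>
    hx₀ (by simpa using congrArg (x₀ ∈ ·.verts) h)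
  obtain ⟨ψ⟩ := hG.2 _ hne
  refine ⟨fun x => if hx : x ∈ S then ψ ⟨x, hx⟩ else Classical.arbitrary W, ?_⟩
  intro x y hxy hx hy
  have hxy' : ((⊤ : G.Subgraph).induce S).coe.Adj ⟨x, hx⟩ ⟨y, hy⟩ := ⟨hx, hy, hxy⟩
  simpa [hx, hy] using ψ.map_adj hxy'

end HCritical

theorem nonempty_hom_of_strings {V W ι : Type} [Fintype V] {G : SimpleGraph V}
    [DecidableRel G.Adj] {H : SimpleGraph W} {v : V} {w : ι → V} {p : ∀ i, G.Walk v (w i)}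
    (hp : ∀ i, IsString G (p i))
    (hdisj : Pairwise fun i j => Disjoint (p i).internalVerts (p j).internalVerts)
    (f : V → W)
    (hf : ∀ ⦃x y⦄, G.Adj x y → (∀ i, s(x, y) ∉ (p i).edges) → H.Adj (f x) (f y))
    (c : ∀ i, H.Walk (f v) (f (w i))) (hc : ∀ i, (c i).length = (p i).length) :
    Nonempty (G →g H) := by
  have hext : ∀ x, ∃ y : W, ((∀ i, x ∉ (p i).internalVerts) → y = f x) ∧
      ∀ i s, s ≤ (p i).length → (p i).getVert s = x → y = (c i).getVert s := by
    intro x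
    by_cases hx : ∃ i, x ∈ (p i).internalVerts
    · obtain ⟨i, s, hs0, hs, rfl⟩ := hx
      refine ⟨(c i).getVert s, fun h => absurd ⟨s, hs0, hs, rfl⟩ (h i),
        fun j s' hs' hj => ?_⟩
      have hs'0 : s' ≠ 0 := by
        rintro rfl
        exact (hp i).isPath.start_notMem_internalVerts
          ⟨s, hs0, hs, hj.symm.trans (getVert_zero _)⟩
      have hs'l : s' ≠ (p j).length := by
        rintro rfl
        refine (hp i).notMem_internalVerts_of_three_le_degree ?_ ⟨s, hs0, hs, hj.symm⟩
        rw [getVert_length]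
        exact (hp j).2.2.1
      obtain rfl : j = i := by
        by_contra hji
        exact Set.disjoint_left.1 (hdisj hji) ⟨s', by omega, by omega, rfl⟩
          ⟨s, hs0, hs, hj.symm⟩
      rw [(hp j).isPath.getVert_injOn (by simp; omega) (by simp; omega) hj]
    · push Not at hx
      refine ⟨f x, fun _ => rfl, fun i s hs hi => ?_⟩
      subst hi
      rcases Nat.eq_zero_or_pos s with rfl | hs0
      · simp
      rcases hs.lt_or_eq with hs | rfl
      · exact absurd ⟨s, hs0, hs, rfl⟩ (hx i)
      · rw [getVert_length, ← hc i, getVert_length]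
  choose g hg hgp using hext
  refine ⟨⟨g, fun {x y} hxy => ?_⟩⟩
  by_cases he : ∃ i, s(x, y) ∈ (p i).edges
  · obtain ⟨i, he⟩ := he
    obtain ⟨t, ht, hxy'⟩ := (mk_mem_edges_iff_exists _).1 he
    have hadj := (c i).adj_getVert_succ (hc i ▸ ht)
    rw [← hgp _ i t ht.le rfl, ← hgp _ i (t + 1) ht rfl] at hadj
    rcases Sym2.eq_iff.1 hxy' with ⟨rfl, rfl⟩ | ⟨rfl, rfl⟩
    · exact hadj
    · exact hadj.symm
  · push Not at he
    have hx : ∀ i, x ∉ (p i).internalVerts := fun i hx =>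
      he i ((hp i).mk_mem_edges_of_adj hx hxy)
    have hy : ∀ i, y ∉ (p i).internalVerts := fun i hy =>
      he i (Sym2.eq_swap ▸ (hp i).mk_mem_edges_of_adj hy hxy.symm)
    rw [hg x hx, hg y hy]
    exact hf hxy he

section CycleGraph

open Finset
open scoped Fin.NatCast Fin.CommRing

variable {n : ℕ} [NeZero n]

theorem cycleGraph_adj_add_one (h3 : 3 ≤ n) (a : Fin n) : (cycleGraph n).Adj a (a + 1) := by
  rw [cycleGraph_adj', add_sub_cancel_left, Fin.val_one', Nat.mod_eq_of_lt (by omega)]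
  exact .inr rfl

theorem cycleGraph_adj_sub_one (h3 : 3 ≤ n) (a : Fin n) : (cycleGraph n).Adj a (a - 1) := by
  rw [cycleGraph_adj', sub_sub_cancel, Fin.val_one', Nat.mod_eq_of_lt (by omega)]
  exact .inl rfl

/-- Going `L - j` steps forward and `j` steps back. -/
theorem cycleGraph_exists_walk_length (h3 : 3 ≤ n) (a : Fin n) {L j : ℕ} (hj : j ≤ L) :
    ∃ W : (cycleGraph n).Walk a (a + L - 2 * j), W.length = L := by
  induction L generalizing a j with
  | zero => exact ⟨Walk.nil.copy rfl (by simp [Nat.le_zero.1 hj]), by simp⟩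
  | succ L ih =>
    cases j with
    | zero =>
      obtain ⟨W, hW⟩ := ih (a + 1) (Nat.zero_le L)
      exact ⟨(W.cons (cycleGraph_adj_add_one h3 a)).copy rfl (by push_cast; ring), by simp [hW]⟩
    | succ j =>
      obtain ⟨W, hW⟩ := ih (a - 1) (by omega : j ≤ L)
      exact ⟨(W.cons (cycleGraph_adj_sub_one h3 a)).copy rfl (by push_cast; ring), by simp [hW]⟩

open Classical in
/-- In an odd cycle, the vertices `b - L + 2 j` for `j < min n (L + 1)` are distinct and all reach
`b` in exactly `L` steps. -/
theorem card_filter_not_exists_walk_length_le (hodd : Odd n) (h3 : 3 ≤ n) (b : Fin n) (L : ℕ) :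
    #{a | ¬ ∃ W : (cycleGraph n).Walk a b, W.length = L} ≤ n - (L + 1) := by
  set A : Finset (Fin n) := (range (min n (L + 1))).image fun j : ℕ => b - L + 2 * j
  have hA : #A = min n (L + 1) := by
    rw [card_image_of_injOn, card_range]
    intro j hj j' hj' h
    simp only [coe_range, Set.mem_Iio, lt_min_iff] at hj hj'
    have h2 : ((2 * j : ℕ) : Fin n) = ((2 * j' : ℕ) : Fin n) := by
      push_cast; exact add_left_cancel h
    have hmod : 2 * j ≡ 2 * j' [MOD n] := by
      simpa only [Nat.ModEq, Fin.val_natCast] using congrArg Fin.val h2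
    have := Nat.ModEq.cancel_left_of_coprime (Nat.Coprime.gcd_eq_one hodd.coprime_two_right) hmod
    rwa [Nat.ModEq, Nat.mod_eq_of_lt hj.1, Nat.mod_eq_of_lt hj'.1] at this
  have hAgood : A ⊆ ({a | ∃ W : (cycleGraph n).Walk a b, W.length = L} : Finset (Fin n)) := by
    simp only [A, image_subset_iff, mem_range, lt_min_iff, mem_filter, mem_univ, true_and]
    intro j hj
    obtain ⟨W, hW⟩ := cycleGraph_exists_walk_length h3 (b - L + 2 * j) (by omega : j ≤ L)
    exact ⟨W.copy rfl (by ring), by simp [hW]⟩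
  have := card_le_card hAgood
  have := card_filter_add_card_filter_not (s := univ)
    (fun a => ∃ W : (cycleGraph n).Walk a b, W.length = L)
  simp only [card_univ, Fintype.card_fin] at this
  omega

theorem cycleGraph_exists_walk_length_of_le (hodd : Odd n) (h3 : 3 ≤ n)
    (a b : Fin n) {L : ℕ} (hL : n ≤ L + 1) : ∃ W : (cycleGraph n).Walk a b, W.length = L := by
  classical
  have hcard := card_filter_not_exists_walk_length_le hodd h3 b L
  rw [Nat.sub_eq_zero_of_le hL, Nat.le_zero, card_eq_zero, filter_eq_empty_iff] at hcard
  simpa using hcard (mem_univ a)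

theorem cycleGraph_exists_forall_walk_length {ι : Type} [Fintype ι] (hodd : Odd n) (h3 : 3 ≤ n)
    (b : ι → Fin n) (L : ι → ℕ) (hL : ∑ i, (n - (L i + 1)) < n) :
    ∃ a, ∀ i, ∃ W : (cycleGraph n).Walk a (b i), W.length = L i := by
  classical
  by_contra! hno
  have hcover : (univ : Finset (Fin n)) ⊆
      univ.biUnion fun i => {a | ¬ ∃ W : (cycleGraph n).Walk a (b i), W.length = L i} := by
    intro a _
    obtain ⟨i, hi⟩ := hno a
    simpa using ⟨i, hi⟩
  have := (card_le_card hcover).trans (card_biUnion_le.trans (sum_le_sum fun i _ =>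
    card_filter_not_exists_walk_length_le hodd h3 (b i) (L i)))
  simp only [card_univ, Fintype.card_fin] at this
  omega

end CycleGraph

section Critical

variable {V : Type} [Fintype V] {G : SimpleGraph V} [DecidableRel G.Adj] {n : ℕ}

/-- Otherwise the string could be mapped onto a walk of the same length between any two vertices
of the odd cycle. -/
theorem IsString.length_add_two_le (hG : HCritical G (cycleGraph n)) (hodd : Odd n)
    (h3 : 3 ≤ n) {u b : V} {p : G.Walk u b} (hp : IsString G p) : p.length + 2 ≤ n := by
  have : NeZero n := ⟨by omega⟩
  by_contra! hlong
  obtain ⟨f, hf⟩ := hG.exists_map_adj_of_notMem (S := p.internalVertsᶜ)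
    (not_not.2 (⟨1, one_pos, by omega, rfl⟩ : p.snd ∈ p.internalVerts))
  obtain ⟨c, hc⟩ := cycleGraph_exists_walk_length_of_le hodd h3 (f u) (f b) (L := p.length)
    (by omega)
  refine hG.1 (nonempty_hom_of_strings (p := fun _ : Unit => p) (fun _ => hp)
    Subsingleton.pairwise f (fun x y hxy hxy' => hf hxy ?_ ?_) (fun _ => c) (fun _ => hc))
  · exact fun hx => hxy' () (hp.mk_mem_edges_of_adj hx hxy)
  · exact fun hy => hxy' () (Sym2.eq_swap ▸ hp.mk_mem_edges_of_adj hy hxy.symm)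

/-- Colour `G` minus `v` and the interiors of the strings; a colour for `v` that every string can
bridge, which exists unless the right-hand side reaches `n`, would give a homomorphism of `G`. -/
theorem HCritical.le_sum_sub_length (hG : HCritical G (cycleGraph n)) (hodd : Odd n)
    (h3 : 3 ≤ n) {ι : Type} [Fintype ι] {v : V} {w : ι → V} {p : ∀ i, G.Walk v (w i)}
    (hp : ∀ i, IsString G (p i)) (hsnd : Function.Injective fun i => (p i).snd)
    (hnbr : ∀ y, G.Adj v y ↔ ∃ i, (p i).snd = y) :
    n ≤ ∑ i, (n - ((p i).length + 1)) := by
  classical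
  have : NeZero n := ⟨by omega⟩
  by_contra! hsum
  set S : Set V := {x | x ≠ v ∧ ∀ i, x ∉ (p i).internalVerts}
  obtain ⟨f₀, hf₀⟩ := hG.exists_map_adj_of_notMem (S := S) (x₀ := v) fun h => h.1 rfl
  obtain ⟨a, ha⟩ := cycleGraph_exists_forall_walk_length hodd h3 (fun i => f₀ (w i)) _ hsum
  choose c hc using ha
  have hnil : ∀ i, ¬ (p i).Nil := fun i hn => by
    have hadj := (hnbr _).2 ⟨i, rfl⟩
    rw [Walk.snd, getVert_of_length_le _ (by simp [length_eq_zero_iff.2 hn])] at hadj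
    exact hadj.ne hn.eq
  have hw : ∀ i, w i ≠ v := fun i h => hnil i ((hp i).isPath.nil_iff_eq.2 h.symm)
  have hS : ∀ ⦃x y⦄, G.Adj x y → (∀ i, s(x, y) ∉ (p i).edges) → x ∈ S := by
    intro x y hxy hxy'
    refine ⟨?_, fun i hx => hxy' i ((hp i).mk_mem_edges_of_adj hx hxy)⟩
    rintro rfl
    obtain ⟨i, rfl⟩ := (hnbr y).1 hxy
    exact hxy' i (mk_start_snd_mem_edges (hnil i))
  have hf : ∀ ⦃x y⦄, G.Adj x y → (∀ i, s(x, y) ∉ (p i).edges) →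
      (cycleGraph n).Adj (Function.update f₀ v a x) (Function.update f₀ v a y) := by
    intro x y hxy hxy'
    have hx := hS hxy hxy'
    have hy := hS hxy.symm (fun i => Sym2.eq_swap ▸ hxy' i)
    rw [Function.update_of_ne hx.1, Function.update_of_ne hy.1]
    exact hf₀ hxy hx hy
  refine hG.1 (nonempty_hom_of_strings hp
    (fun i j hij => (hp i).disjoint_internalVerts (hp j) (hsnd.ne hij)) _ hf
    (fun i => (c i).copy (Function.update_self v a f₀).symm
      (Function.update_of_ne (hw i) a f₀).symm)
    (fun i => by simp [hc]))

end Critical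

theorem weight_bound_general (n : ℕ) (hodd : Odd n) (h3 : 3 ≤ n)
    {V : Type} [Fintype V] (G : SimpleGraph V) [DecidableRel G.Adj]
    (hcrit : HCritical G (cycleGraph n))
    (v : V) (d : ℕ) (hdeg : G.degree v = d)
    (w : Fin d → V) (p : ∀ i : Fin d, G.Walk v (w i))
    (hstr : ∀ i, IsString G (p i))
    (hdist : ∀ i j, i ≠ j → (p i).support ≠ (p j).support)
    (k : Fin d → ℕ) (hk : ∀ i, (p i).length = k i + 1) :
    (∑ i, (k i : ℤ)) ≤ (n - 2) * d - n := by
  have hsnd : Function.Injective fun i => (p i).snd := fun i j h => by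
    by_contra hij
    exact hdist i j hij ((hstr i).support_eq_of_snd_eq (hstr j) h)
  have hnbr := adj_iff_exists_snd_eq_of_degree_le
    (fun i => by simp [← Walk.length_eq_zero_iff, hk]) hsnd (by simp [hdeg])
  have hsum := hcrit.le_sum_sub_length hodd h3 hstr hsnd hnbr
  have hterm : ∀ i, ((n - ((p i).length + 1) : ℕ) : ℤ) = n - 2 - k i := fun i => by
    have := (hstr i).length_add_two_le hcrit hodd h3
    rw [hk i] at this ⊢
    omega
  have : (n : ℤ) ≤ ∑ i, ((n : ℤ) - 2 - k i) := by
    simpa only [Nat.cast_sum, hterm] using (Nat.cast_le (α := ℤ)).2 hsum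
  rw [Finset.sum_sub_distrib, Finset.sum_const, Finset.card_univ, Fintype.card_fin,
    nsmul_eq_mul] at this
  linarith

/-- Let `H = C_n` be an odd cycle and `G` an `H`-critical graph.  If `v`
is a vertex of degree `d ≥ 3` incident with `d` distinct strings having
`k 0, ..., k (d-1)` internal vertices respectively, then
`∑ i, k i ≤ (n - 2) * d - n`. -/
theorem weight_bound (n : ℕ) (hodd : Odd n) (h3 : 3 ≤ n)
    {V : Type} [Fintype V] (G : SimpleGraph V) [DecidableRel G.Adj]
    (hcrit : HCritical G (cycleGraph n))
    (v : V) (d : ℕ) (hd : 3 ≤ d) (hdeg : G.degree v = d)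
    (w : Fin d → V) (p : ∀ i : Fin d, G.Walk v (w i))
    (hstr : ∀ i, IsString G (p i))
    (hdist : ∀ i j, i ≠ j → (p i).support ≠ (p j).support)
    (k : Fin d → ℕ) (hk : ∀ i, (p i).length = k i + 1) :
    (∑ i, (k i : ℤ)) ≤ (n - 2) * d - n :=
  weight_bound_general n hodd h3 G hcrit v d hdeg w p hstr hdist k hk
end
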